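/- For every m ≥ 3, the Laurent polynomial V' m is nonzero and maxdeg (V' m) > m; consequently V' m ≠ U^m, where U := -z - z⁻¹. (Hence for every m ≥ 3 there exist links satisfying properties (1)–(4) of the Main Theorem: link homotopically trivial, not link isotopically trivial, with all proper sublinks trivial and all Milnor invariants zero.) -/

import Mathlib

open LaurentPolynomial

noncomputable def U : LaurentPolynomial ℤ := -T 1 - T (-1)

noncomputable def Q3' : LaurentPolynomial ℤ :=
  -T 12 + T 10 + T 6 + 2 * T 4 + 2 * T 2 + 6 + 2 * T (-2) + 2 * T (-4) + T (-6)
    + T (-10) - T (-12)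

/-- The maximum exponent in the support of a Laurent polynomial. -/
noncomputable def maxdeg (p : LaurentPolynomial ℤ) : WithBot ℤ := p.coeff.support.max

/-- The minimum exponent in the support of a Laurent polynomial. -/
noncomputable def mindeg (p : LaurentPolynomial ℤ) : WithTop ℤ := p.coeff.support.min

/-!
Multiplying by `z^5 - z^3 - z⁻³ + z⁻⁵` shifts the top term of `V' m` up by exactly `5`, while the
correction term `U^(m+1) · (…)` has degree at most `m + 6`, far below. Hence by induction from
`Q₃' = -z^12 + …` the top term of `V' m` is `-z^(5m-3)`. So `V' m ≠ 0`, its degree `5m - 3`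
exceeds `m`, and it cannot equal `U^m`, whose degree is at most `m`.
-/

namespace LaurentPolynomial

variable {R : Type*} [Semiring R]

lemma coeff_mul_T (p : R[T;T⁻¹]) (a n : ℤ) : (p * T a).coeff n = p.coeff (n - a) := by
  rw [T, AddMonoidAlgebra.coeff_mul_single_apply, mul_one, sub_eq_add_neg]

lemma degree_mul_le (p q : R[T;T⁻¹]) : (p * q).degree ≤ p.degree + q.degree :=
  AddMonoidAlgebra.supDegree_mul_le fun _ _ => WithBot.coe_add ..

lemma coeff_eq_zero_of_degree_lt {p : R[T;T⁻¹]} {n : ℤ} (h : p.degree < n) : p.coeff n = 0 :=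
  AddMonoidAlgebra.coeff_eq_zero_of_not_le_supDegree h.not_ge

lemma degree_eq_of_coeff_ne_zero {p : R[T;T⁻¹]} {d : ℤ} (hd : p.coeff d ≠ 0)
    (hgt : ∀ n, d < n → p.coeff n = 0) : p.degree = d :=
  AddMonoidAlgebra.supDegree_eq_of_isMaxOn (Finsupp.mem_support_iff.2 hd) fun n hn =>
    WithBot.coe_le_coe.2 <| not_lt.1 fun h => Finsupp.mem_support_iff.1 hn (hgt n h)

end LaurentPolynomial

lemma coeff_recurrence_of_le {R : Type*} [Ring R] {p q : R[T;T⁻¹]} {d n : ℤ}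
    (hp : ∀ k, d < k → p.coeff k = 0) (hq : ∀ k, d ≤ k → q.coeff k = 0) (hn : d + 5 ≤ n) :
    (p * (T 5 - T 3 - T (-3) + T (-5)) -
      q * (T 5 - T 3 - T 1 + T (-1) - T (-3) + T (-5))).coeff n = p.coeff (n - 5) := by
  simp (disch := omega) [mul_add, mul_sub, coeff_mul_T, hp, hq]

lemma degree_U_le : U.degree ≤ 1 :=
  AddMonoidAlgebra.supDegree_sub_le.trans <| sup_le
    (AddMonoidAlgebra.supDegree_neg.trans_le (degree_T_le 1))
    ((degree_T_le (-1)).trans (by norm_num))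

lemma degree_U_pow_le (m : ℕ) : (U ^ m).degree ≤ m := by
  induction m with
  | zero => simpa using degree_T_le (R := ℤ) 0
  | succ m ih =>
    calc (U ^ (m + 1)).degree ≤ (U ^ m).degree + U.degree := by
          rw [pow_succ]; exact degree_mul_le _ _
      _ ≤ m + 1 := add_le_add ih degree_U_le
      _ = (m + 1 : ℕ) := by norm_cast

lemma coeff_U_pow_of_lt {m : ℕ} {n : ℤ} (h : m < n) : (U ^ m).coeff n = 0 :=
  coeff_eq_zero_of_degree_lt <| (degree_U_pow_le m).trans_lt (WithBot.coe_lt_coe.2 h)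

lemma coeff_Q3'_twelve : Q3'.coeff 12 = -1 := by
  simp [Q3', two_mul]

lemma coeff_Q3'_of_lt {n : ℤ} (hn : 12 < n) : Q3'.coeff n = 0 := by
  simp (disch := omega) [Q3', two_mul, if_neg]

lemma coeff_V'_top (V' : ℕ → LaurentPolynomial ℤ) (hV3 : V' 3 = Q3')
    (hVrec : ∀ m : ℕ, 3 ≤ m → V' (m + 1) =
      V' m * (T 5 - T 3 - T (-3) + T (-5)) -
        U ^ (m + 1) * (T 5 - T 3 - T 1 + T (-1) - T (-3) + T (-5)))
    {m : ℕ} (hm : 3 ≤ m) :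
    (V' m).coeff (5 * m - 3) = -1 ∧ ∀ n, 5 * (m : ℤ) - 3 < n → (V' m).coeff n = 0 := by
  induction m, hm using Nat.le_induction with
  | base => exact hV3 ▸ ⟨coeff_Q3'_twelve, fun n hn => coeff_Q3'_of_lt (by omega)⟩
  | succ m hm ih =>
    have hstep : ∀ n, 5 * (m : ℤ) + 2 ≤ n → (V' (m + 1)).coeff n = (V' m).coeff (n - 5) :=
      fun n hn => hVrec m hm ▸ coeff_recurrence_of_le ih.2
        (fun k hk => coeff_U_pow_of_lt (by push_cast; omega)) (by omega)
    push_cast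
    refine ⟨?_, fun n hn => ?_⟩
    · rw [hstep _ (by omega), ← ih.1]
      congr 1
      ring
    · rw [hstep _ (by omega)]
      exact ih.2 _ (by omega)

/-- For every `m ≥ 3`, `maxdeg (V' m) > m`, hence `V' m` differs from the Jones
polynomial of the `m`-component unlink. -/
theorem V'_ne_unlink (V' : ℕ → LaurentPolynomial ℤ) (hV3 : V' 3 = Q3')
    (hVrec : ∀ m : ℕ, 3 ≤ m → V' (m + 1) =
      V' m * (T 5 - T 3 - T (-3) + T (-5)) -
        U ^ (m + 1) * (T 5 - T 3 - T 1 + T (-1) - T (-3) + T (-5))) :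
    ∀ m : ℕ, 3 ≤ m →
      V' m ≠ 0 ∧ (((m : ℤ) : WithBot ℤ) < maxdeg (V' m)) ∧ V' m ≠ U ^ m := by
  intro m hm
  obtain ⟨htop, hvanish⟩ := coeff_V'_top V' hV3 hVrec hm
  have hdeg : (V' m).degree = (5 * m - 3 : ℤ) :=
    degree_eq_of_coeff_ne_zero (by rw [htop]; norm_num) hvanish
  have hlt : ((m : ℤ) : WithBot ℤ) < (V' m).degree := hdeg ▸ WithBot.coe_lt_coe.2 (by omega)
  -- `maxdeg` is `LaurentPolynomial.degree` by definition
  refine ⟨fun h => ?_, hlt, fun h => ?_⟩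
  · simp [h] at hdeg
  · exact (degree_U_pow_le m).not_gt (h ▸ hlt)
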